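/- Let V be a finite index set with finite state spaces X_v of size at least 2, and let L ⊆ M ⊆ V with L nonempty and N = M ∖ L. Suppose p and q are strictly positive probability distributions on X_M such that (a) λ_A^M(x_A)[p] = λ_A^M(x_A)[q] for every A with L ⊆ A ⊆ M and every x_A ∈ X_A, and (b) for every v ∈ L, the conditional distributions of X_{L∖{v}} given X_N agree: p_{L∖{v}|N} = q_{L∖{v}|N}. Then the conditional distributions of X_L given X_N agree: p_{L|N}(x_L | x_N) = q_{L|N}(x_L | x_N) for all x_L ∈ X_L, x_N ∈ X_N. -/

import Mathlib

open Finset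

open scoped Classical

variable {V : Type} [Fintype V] [DecidableEq V]

/-- Joint state space: variable `v` takes values in `{0, …, d v + 1}`,
so each state space has size `d v + 2 ≥ 2`. -/
abbrev Config (V : Type) (d : V → ℕ) : Type := ∀ v : V, Fin (d v + 2)

/-- Marginal `p_M` of `p` on the margin `M`, as a function of a full configuration
(it depends only on the coordinates in `M`). -/
noncomputable def margin (d : V → ℕ) (p : Config V d → ℝ) (M : Finset V)
    (x : Config V d) : ℝ :=
  ∑ y : Config V d, if ∀ v ∈ M, y v = x v then p y else 0

/-- Marginal log-linear parameter `λ_L^M(x_L)`: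
`|X_M|⁻¹ ∑_{y_M ∈ X_M} log p_M(y_M) ∏_{v ∈ L} (|X_v|·1[x_v = y_v] − 1)`.
The sum over `y_M ∈ X_M` is realized by summing over full configurations `y`
that are `0` outside `M` (one representative for each `y_M`). -/
noncomputable def mll (d : V → ℕ) (p : Config V d → ℝ) (L M : Finset V)
    (x : Config V d) : ℝ :=
  (∏ v ∈ M, ((d v + 2 : ℕ) : ℝ))⁻¹ *
    ∑ y : Config V d,
      if ∀ v ∉ M, y v = 0 then
        Real.log (margin d p M y) *
          ∏ v ∈ L, (((d v + 2 : ℕ) : ℝ) * (if x v = y v then 1 else 0) - 1)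
      else 0

/-- Conditional independence `X_A ⊥ X_B | X_C [p]`:
`p_{A∪B∪C}(x) · p_C(x) = p_{A∪C}(x) · p_{B∪C}(x)` for all configurations. -/
def CondIndep (d : V → ℕ) (p : Config V d → ℝ) (A B C : Finset V) : Prop :=
  ∀ x : Config V d,
    margin d p (A ∪ B ∪ C) x * margin d p C x
      = margin d p (A ∪ C) x * margin d p (B ∪ C) x

/-!
Write `r = p_{L|N}` and `s = q_{L|N}`. By (b), `r - s` sums to zero over each coordinate `x_v`
with `v ∈ L`, so it is orthogonal to every function not depending on some such `x_v`. Expanding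
the MLL kernel gives `∑_{C ⊆ N} λ_{L ∪ C}^M = ∑_{S ⊆ L} (-1)^{|S|} E_S log p_M`, where `E_S`
averages over `x_S`; by (a) the left side is the same for `p` and `q`, so `log p_M - log q_M` is
a linear combination of such functions, and so is `log p_N - log q_N`. Hence
`∑ (r - s)(log r - log s) = 0`, and since every term is nonnegative and vanishes only where
`r = s`, we get `r = s`.
-/

theorem sub_mul_log_sub_pos {a b : ℝ} (ha : 0 < a) (hb : 0 < b) (hab : a ≠ b) :
    0 < (a - b) * (Real.log a - Real.log b) := by
  rcases hab.lt_or_gt with h | h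
  · exact mul_pos_of_neg_of_neg (sub_neg.2 h) (sub_neg.2 (Real.log_lt_log ha h))
  · exact mul_pos (sub_pos.2 h) (sub_pos.2 (Real.log_lt_log hb h))

theorem eq_of_sum_sub_mul_log_sub_eq_zero {ι : Type*} [Fintype ι] {r s : ι → ℝ}
    (hr : ∀ i, 0 < r i) (hs : ∀ i, 0 < s i)
    (h : ∑ i, (r i - s i) * (Real.log (r i) - Real.log (s i)) = 0) (i : ι) : r i = s i := by
  by_contra hi
  have hnonneg : ∀ j ∈ univ, 0 ≤ (r j - s j) * (Real.log (r j) - Real.log (s j)) := by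
    intro j _
    by_cases hj : r j = s j
    · simp [hj]
    · exact (sub_mul_log_sub_pos (hr j) (hs j) hj).le
  exact (sum_pos' hnonneg ⟨i, mem_univ i, sub_mul_log_sub_pos (hr i) (hs i) hi⟩).ne' h

theorem Fintype.sum_mul_eq_zero_of_sum_update_eq_zero {ι R : Type*} [Fintype ι] [DecidableEq ι]
    {β : ι → Type*} [∀ i, Fintype (β i)] [NonUnitalNonAssocSemiring R]
    {f g : (∀ i, β i) → R} (i : ι) (hf : ∀ x, ∑ a, f (Function.update x i a) = 0)
    (hg : ∀ x a, g (Function.update x i a) = g x) :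
    ∑ x, f x * g x = 0 := by
  set e := Equiv.piSplitAt i β
  rw [← e.symm.sum_comp, Fintype.sum_prod_type, sum_comm]
  refine Finset.sum_eq_zero fun z _ => ?_
  cases isEmpty_or_nonempty (β i) with
  | inl _ => simp
  | inr hne =>
    obtain ⟨b⟩ := hne
    set x₀ := e.symm (b, z)
    have hslice : ∀ a, e.symm (a, z) = Function.update x₀ i a := by
      intro a; ext j
      by_cases hj : j = i
      · subst hj; simp [x₀, e]
      · simp [x₀, e, hj]
    simp only [hslice, hg, ← sum_mul, hf, zero_mul]

theorem sum_powerset_prod_union_eq {ι R : Type*} [DecidableEq ι] [CommRing R] {L M : Finset ι}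
    (hLM : L ⊆ M) (k : ι → R) :
    ∑ C ∈ (M \ L).powerset, ∏ v ∈ L ∪ C, k v
      = ∑ S ∈ L.powerset, (-1) ^ #S * ∏ v ∈ M \ S, (k v + 1) := by
  have hlhs : ∀ C ∈ (M \ L).powerset, ∏ v ∈ L ∪ C, k v = (∏ v ∈ L, k v) * ∏ v ∈ C, k v :=
    fun C hC => prod_union (disjoint_sdiff.mono_right (mem_powerset.1 hC))
  have hrhs : ∀ S ∈ L.powerset, (-1) ^ #S * ∏ v ∈ M \ S, (k v + 1)
      = ((∏ v ∈ S, (-1 : R)) * ∏ v ∈ L \ S, (k v + 1)) * ∏ v ∈ M \ L, (k v + 1) := by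
    intro S hS
    have hSL : S ⊆ L := mem_powerset.1 hS
    have hsplit : M \ S = L \ S ∪ M \ L := by grind
    rw [prod_const, mul_assoc, hsplit,
      prod_union (disjoint_sdiff.mono_left sdiff_subset)]
  rw [sum_congr rfl hlhs, sum_congr rfl hrhs, ← mul_sum, ← sum_mul, ← prod_add, prod_add_one]
  simp only [neg_add_cancel_comm_assoc]

section Margin

variable {d : V → ℕ} (p : Config V d → ℝ)

theorem margin_congr {S : Finset V} {x x' : Config V d} (h : ∀ v ∈ S, x v = x' v) :
    margin d p S x = margin d p S x' :=
  sum_congr rfl fun y _ => if_congr (forall₂_congr fun v hv => by rw [h v hv]) rfl rfl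

theorem margin_update {S : Finset V} {v : V} (hv : v ∉ S) (x : Config V d)
    (a : Fin (d v + 2)) : margin d p S (Function.update x v a) = margin d p S x :=
  margin_congr p fun _ hw => Function.update_of_ne (ne_of_mem_of_not_mem hw hv) a x

theorem margin_pos {p : Config V d → ℝ} (hp : ∀ x, 0 < p x) (S : Finset V) (x : Config V d) :
    0 < margin d p S x :=
  sum_pos' (fun y _ => by split_ifs <;> simp [(hp y).le]) ⟨x, mem_univ x, by simp [hp x]⟩

theorem sum_margin_update {M : Finset V} {v : V} (hv : v ∈ M) (x : Config V d) :
    ∑ a, margin d p M (Function.update x v a) = margin d p (M.erase v) x := by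
  unfold margin
  rw [sum_comm]
  refine sum_congr rfl fun y _ => ?_
  have hsplit : ∀ a, (∀ w ∈ M, y w = Function.update x v a w)
      ↔ (y v = a ∧ ∀ w ∈ M.erase v, y w = x w) := by
    intro a
    conv_lhs => rw [← insert_erase hv]
    simp +contextual [Function.update_of_ne]
  simp only [hsplit, ite_and, sum_ite_eq, mem_univ, if_true]

theorem sum_update_margin_div_margin {M N : Finset V} {v : V} (hvM : v ∈ M) (hvN : v ∉ N)
    (x : Config V d) :
    ∑ a, margin d p M (Function.update x v a) / margin d p N (Function.update x v a)
      = margin d p (M.erase v) x / margin d p N x := by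
  simp_rw [margin_update p hvN, ← sum_div, sum_margin_update p hvM]

end Margin

section SliceMean

variable {d : V → ℕ}

/-- The mean of `F` over `y_S ∈ X_S` with `y = x` on `M \ S`, configurations being represented,
as in `mll`, by their values on `M` and `0` outside `M`. -/
noncomputable def sliceMean (d : V → ℕ) (F : Config V d → ℝ) (M S : Finset V)
    (x : Config V d) : ℝ :=
  (∏ v ∈ S, ((d v + 2 : ℕ) : ℝ))⁻¹ *
    ∑ y : Config V d, if (∀ v ∉ M, y v = 0) ∧ ∀ v ∈ M \ S, y v = x v then F y else 0

theorem sliceMean_update (F : Config V d → ℝ) {M S : Finset V} {v : V} (hv : v ∈ S)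
    (x : Config V d) (a : Fin (d v + 2)) :
    sliceMean d F M S (Function.update x v a) = sliceMean d F M S x := by
  unfold sliceMean
  congr 1
  refine sum_congr rfl fun y _ => if_congr (and_congr_right fun _ => ?_) rfl rfl
  refine forall₂_congr fun w hw => ?_
  rw [Function.update_of_ne (ne_of_mem_of_not_mem hv (mem_sdiff.1 hw).2).symm]

theorem sliceMean_sub (F G : Config V d → ℝ) (M S : Finset V) (x : Config V d) :
    sliceMean d (F - G) M S x = sliceMean d F M S x - sliceMean d G M S x := by
  simp only [sliceMean, ← mul_sub, ← sum_sub_distrib]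
  congr 2 with y
  split_ifs <;> simp

theorem sliceMean_empty {F : Config V d → ℝ} {M : Finset V}
    (hF : ∀ x x', (∀ v ∈ M, x v = x' v) → F x = F x') (x : Config V d) :
    sliceMean d F M ∅ x = F x := by
  set x₀ : Config V d := fun w => if w ∈ M then x w else 0
  have hx₀ : ∀ y : Config V d,
      ((∀ v ∉ M, y v = 0) ∧ ∀ v ∈ M \ ∅, y v = x v) ↔ y = x₀ := by
    intro y
    simp only [sdiff_empty, funext_iff, x₀]
    grind
  simp only [sliceMean, prod_empty, inv_one, one_mul, hx₀, sum_ite_eq', mem_univ, if_true]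
  exact hF _ _ fun v hv => if_pos hv

theorem sum_powerset_mll_eq_sum_sliceMean (p : Config V d → ℝ) {L M : Finset V} (hLM : L ⊆ M)
    (x : Config V d) :
    ∑ C ∈ (M \ L).powerset, mll d p (L ∪ C) M x
      = ∑ S ∈ L.powerset, (-1) ^ #S * sliceMean d (fun y => Real.log (margin d p M y)) M S x := by
  have hkernel : ∀ y : Config V d,
      ∑ C ∈ (M \ L).powerset,
          ∏ v ∈ L ∪ C, (((d v + 2 : ℕ) : ℝ) * (if x v = y v then 1 else 0) - 1)
        = ∑ S ∈ L.powerset, (-1) ^ #S * ((∏ v ∈ M \ S, ((d v + 2 : ℕ) : ℝ)) *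
            if ∀ v ∈ M \ S, y v = x v then 1 else 0) := by
    intro y
    rw [sum_powerset_prod_union_eq hLM]
    refine sum_congr rfl fun S _ => ?_
    simp only [sub_add_cancel, prod_mul_distrib, prod_boole, eq_comm (a := x _)]
    congr
  have hnorm : ∀ S ∈ L.powerset, (∏ v ∈ M, ((d v + 2 : ℕ) : ℝ))⁻¹ * ∏ v ∈ M \ S, ((d v + 2 : ℕ) : ℝ)
      = (∏ v ∈ S, ((d v + 2 : ℕ) : ℝ))⁻¹ := by
    intro S hS
    rw [← prod_sdiff ((mem_powerset.1 hS).trans hLM)]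
    field_simp
  simp only [mll, sliceMean, ← ite_zero_mul]
  simp_rw [← mul_sum, sum_comm (s := (M \ L).powerset), ← mul_sum, hkernel, mul_sum]
  rw [sum_comm]
  refine sum_congr rfl fun S hS => sum_congr rfl fun y _ => ?_
  rw [← hnorm S hS, ite_and]
  split_ifs <;> ring

section Conditional

/-- `p_{L | M \ L}(x_L | x_{M \ L})`. -/
noncomputable def condProb (d : V → ℕ) (p : Config V d → ℝ) (L M : Finset V) (x : Config V d) :
    ℝ :=
  margin d p M x / margin d p (M \ L) x

variable {d : V → ℕ} {L M : Finset V} {p q : Config V d → ℝ}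

theorem condProb_pos (hp : ∀ x, 0 < p x) (x : Config V d) : 0 < condProb d p L M x :=
  div_pos (margin_pos hp M x) (margin_pos hp _ x)

theorem log_condProb (hp : ∀ x, 0 < p x) (x : Config V d) :
    Real.log (condProb d p L M x) = Real.log (margin d p M x) - Real.log (margin d p (M \ L) x) :=
  Real.log_div (margin_pos hp M x).ne' (margin_pos hp _ x).ne'

theorem sum_update_condProb_sub_eq_zero (hLM : L ⊆ M)
    (hb : ∀ v ∈ L, ∀ x : Config V d,
      margin d p (L.erase v ∪ (M \ L)) x / margin d p (M \ L) x
        = margin d q (L.erase v ∪ (M \ L)) x / margin d q (M \ L) x)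
    {v : V} (hv : v ∈ L) (x : Config V d) :
    ∑ a, (condProb d p L M (Function.update x v a) - condProb d q L M (Function.update x v a))
      = 0 := by
  have hvN : v ∉ M \ L := fun h => (mem_sdiff.1 h).2 hv
  have hM : M.erase v = L.erase v ∪ (M \ L) := by
    conv_lhs => rw [← union_sdiff_of_subset hLM]
    rw [erase_union_distrib, erase_eq_of_notMem hvN]
  unfold condProb
  rw [sum_sub_distrib, sum_update_margin_div_margin p (hLM hv) hvN,
    sum_update_margin_div_margin q (hLM hv) hvN, hM, hb v hv x, sub_self]

theorem sum_mul_log_margin_sub_eq_zero (hLM : L ⊆ M)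
    (ha : ∀ A : Finset V, L ⊆ A → A ⊆ M →
      ∀ x : Config V d, mll d p A M x = mll d q A M x)
    {h : Config V d → ℝ} (hh : ∀ v ∈ L, ∀ x, ∑ a, h (Function.update x v a) = 0) :
    ∑ x, h x * (Real.log (margin d p M x) - Real.log (margin d q M x)) = 0 := by
  set G : Config V d → ℝ := fun y => Real.log (margin d p M y) - Real.log (margin d q M y)
    with hG
  have hmean : ∀ x, ∑ S ∈ L.powerset, (-1) ^ #S * sliceMean d G M S x = 0 := by
    intro x
    calc ∑ S ∈ L.powerset, (-1) ^ #S * sliceMean d G M S x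
        = ∑ C ∈ (M \ L).powerset, mll d p (L ∪ C) M x
          - ∑ C ∈ (M \ L).powerset, mll d q (L ∪ C) M x := by
          simp only [sum_powerset_mll_eq_sum_sliceMean _ hLM, ← sum_sub_distrib, ← mul_sub,
            ← sliceMean_sub]
          rfl
      _ = 0 := by
          refine sub_eq_zero.2 (sum_congr rfl fun C hC => ha _ subset_union_left ?_ x)
          exact union_subset hLM ((mem_powerset.1 hC).trans sdiff_subset)
  have hGM : ∀ x x' : Config V d, (∀ v ∈ M, x v = x' v) → G x = G x' := fun x x' hxx' => by
    simp only [hG, margin_congr p hxx', margin_congr q hxx']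
  have hG_eq : ∀ x, G x = -∑ S ∈ L.powerset.erase ∅, (-1) ^ #S * sliceMean d G M S x := by
    intro x
    have h0 := hmean x
    rw [← add_sum_erase _ _ (empty_mem_powerset L), card_empty, pow_zero, one_mul,
      sliceMean_empty hGM] at h0
    linarith
  calc ∑ x, h x * G x
      = -∑ S ∈ L.powerset.erase ∅, (-1) ^ #S * ∑ x, h x * sliceMean d G M S x := by
        simp only [hG_eq, mul_neg, sum_neg_distrib, mul_sum]
        rw [sum_comm]
        simp only [mul_left_comm]
    _ = 0 := by
        refine neg_eq_zero.2 (Finset.sum_eq_zero fun S hS => ?_)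
        obtain ⟨v, hv⟩ := nonempty_iff_ne_empty.2 (ne_of_mem_erase hS)
        have hvL : v ∈ L := mem_powerset.1 (mem_of_mem_erase hS) hv
        rw [Fintype.sum_mul_eq_zero_of_sum_update_eq_zero v (hh v hvL) (sliceMean_update G hv),
          mul_zero]

end Conditional

theorem conditional_from_mll_and_lower_general (d : V → ℕ)
    (L M : Finset V) (hL : L.Nonempty) (hLM : L ⊆ M)
    (p q : Config V d → ℝ)
    (hppos : ∀ x, 0 < p x)
    (hqpos : ∀ x, 0 < q x)
    (ha : ∀ A : Finset V, L ⊆ A → A ⊆ M →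
      ∀ x : Config V d, mll d p A M x = mll d q A M x)
    (hb : ∀ v ∈ L, ∀ x : Config V d,
      margin d p (L.erase v ∪ (M \ L)) x / margin d p (M \ L) x
        = margin d q (L.erase v ∪ (M \ L)) x / margin d q (M \ L) x) :
    ∀ x : Config V d,
      margin d p M x / margin d p (M \ L) x
        = margin d q M x / margin d q (M \ L) x := by
  set h : Config V d → ℝ := fun x => condProb d p L M x - condProb d q L M x
  have hsum : ∀ v ∈ L, ∀ x, ∑ a, h (Function.update x v a) = 0 :=
    fun v hv => sum_update_condProb_sub_eq_zero hLM hb hv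
  have hjoint := sum_mul_log_margin_sub_eq_zero hLM ha hsum
  obtain ⟨v, hv⟩ := hL
  have hvN : v ∉ M \ L := fun hv' => (mem_sdiff.1 hv').2 hv
  have hcond := Fintype.sum_mul_eq_zero_of_sum_update_eq_zero v (hsum v hv)
    (g := fun x => Real.log (margin d p (M \ L) x) - Real.log (margin d q (M \ L) x))
    fun x a => by simp only [margin_update _ hvN]
  refine eq_of_sum_sub_mul_log_sub_eq_zero (condProb_pos hppos) (condProb_pos hqpos) ?_
  calc ∑ x, h x * (Real.log (condProb d p L M x) - Real.log (condProb d q L M x))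
      = ∑ x, h x * (Real.log (margin d p M x) - Real.log (margin d q M x))
        - ∑ x, h x * (Real.log (margin d p (M \ L) x) - Real.log (margin d q (M \ L) x)) := by
        rw [← sum_sub_distrib]
        refine sum_congr rfl fun x _ => ?_
        rw [log_condProb hppos, log_condProb hqpos]
        ring
    _ = 0 := by rw [hjoint, hcond, sub_zero]

/-- if `p` and `q` are strictly positive distributions whose MLL parameters
`λ_A^M` agree for all `L ⊆ A ⊆ M`, and whose conditional distributions of `X_{L∖{v}}`
given `X_N` agree for every `v ∈ L` (where `N = M ∖ L`), then their conditional
distributions of `X_L` given `X_N` agree. -/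
theorem conditional_from_mll_and_lower (d : V → ℕ)
    (L M : Finset V) (hL : L.Nonempty) (hLM : L ⊆ M)
    (p q : Config V d → ℝ)
    (hppos : ∀ x, 0 < p x) (hpsum : ∑ x, p x = 1)
    (hqpos : ∀ x, 0 < q x) (hqsum : ∑ x, q x = 1)
    (ha : ∀ A : Finset V, L ⊆ A → A ⊆ M →
      ∀ x : Config V d, mll d p A M x = mll d q A M x)
    (hb : ∀ v ∈ L, ∀ x : Config V d,
      margin d p (L.erase v ∪ (M \ L)) x / margin d p (M \ L) x
        = margin d q (L.erase v ∪ (M \ L)) x / margin d q (M \ L) x) :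
    ∀ x : Config V d,
      margin d p M x / margin d p (M \ L) x
        = margin d q M x / margin d q (M \ L) x :=
  conditional_from_mll_and_lower_general d L M hL hLM p q hppos hqpos ha hb
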